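/- arXiv:2401.15202 — 5 statements merged into one kernel-verified Lean document; each statement's English description precedes it below -/
import Mathlib

section
/- For α ∈ (0,1) ∪ (1,∞) and a probability mass function p on a finite set X with full support, the minimum over all probability mass functions q on X of the α-cross entropy H_α(p,q) = (α/(1-α)) log Σ_x p(x) q(x)^((α-1)/α) equals the Rényi entropy H_α(p) = (1/(1-α)) log Σ_x p(x)^α. -/
open Real Finset

theorem min_alpha_cross_entropy_eq_renyi_entropy
    {X : Type*} [Fintype X] [Nonempty X]
    (p : X → ℝ) (hp : ∀ x, 0 < p x) (hpsum : ∑ x, p x = 1)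
    (α : ℝ) (hα : 0 < α) (hα1 : α ≠ 1) :
    IsLeast
      {c : ℝ | ∃ q : X → ℝ, (∀ x, 0 < q x) ∧ (∑ x, q x = 1) ∧
        c = (α / (1 - α)) * Real.log (∑ x, p x * q x ^ ((α - 1) / α))}
      ((1 / (1 - α)) * Real.log (∑ x, p x ^ α)) := by
  have hα0 : α ≠ 0 := ne_of_gt hα
  set Z : ℝ := ∑ x, p x ^ α with hZdef
  have hZpos : 0 < Z :=
    Finset.sum_pos (fun x _ => rpow_pos_of_pos (hp x) α) univ_nonempty
  constructor
  · -- membership: take q x = p x ^ α / Z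
    refine ⟨fun x => p x ^ α / Z,
      fun x => div_pos (rpow_pos_of_pos (hp x) α) hZpos, ?_, ?_⟩
    · rw [← Finset.sum_div, ← hZdef, div_self hZpos.ne']
    · have hterm : ∀ x : X,
          p x * (p x ^ α / Z) ^ ((α - 1) / α) = p x ^ α / Z ^ ((α - 1) / α) := by
        intro x
        rw [Real.div_rpow (rpow_pos_of_pos (hp x) α).le hZpos.le,
          ← Real.rpow_mul (hp x).le]
        have : α * ((α - 1) / α) = α - 1 := by field_simp
        rw [this, ← mul_div_assoc]
        congr 1
        rw [← Real.rpow_one_add' (hp x).le (by simpa using hα0)]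
        ring_nf
      have hsum : (∑ x, p x * (p x ^ α / Z) ^ ((α - 1) / α)) = Z ^ (1 / α) := by
        rw [Finset.sum_congr rfl (fun x _ => hterm x), ← Finset.sum_div, ← hZdef,
          ← Real.rpow_one_sub' hZpos.le]
        · congr 1
          field_simp
          ring
        · intro h
          have : (1 : ℝ) - (α - 1) / α = 1 / α := by field_simp; ring
          rw [this] at h
          exact hα0 (by simpa using h)
      rw [hsum, Real.log_rpow hZpos,
        show α / (1 - α) * (1 / α * Real.log Z)
          = α * (1 / α) * (1 / (1 - α) * Real.log Z) from by ring,
        mul_one_div, div_self hα0, one_mul]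
  · -- lower bound
    rintro c ⟨q, hq, hqsum, rfl⟩
    set S : ℝ := ∑ x, p x * q x ^ ((α - 1) / α) with hSdef
    have hSpos : 0 < S :=
      Finset.sum_pos (fun x _ => mul_pos (hp x) (rpow_pos_of_pos (hq x) _)) univ_nonempty
    rcases lt_or_gt_of_ne hα1 with hlt | hgt
    · -- case α < 1 : show Z ≤ S ^ α
      have h1α : (0:ℝ) < 1 - α := by linarith
      have hconj : Real.HolderConjugate (1/α) (1/(1-α)) :=
        Real.holderConjugate_iff.mpr ⟨by rw [lt_div_iff₀ hα]; linarith, by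
          simp only [one_div, inv_inv]; ring⟩
      have hH := Real.inner_le_Lp_mul_Lq_of_nonneg univ hconj
        (f := fun x => p x ^ α * q x ^ (α - 1)) (g := fun x => q x ^ (1 - α))
        (fun i _ => (mul_pos (rpow_pos_of_pos (hp i) _) (rpow_pos_of_pos (hq i) _)).le)
        (fun i _ => (rpow_pos_of_pos (hq i) _).le)
      have e1 : ∀ x : X, (p x ^ α * q x ^ (α - 1)) * q x ^ (1 - α) = p x ^ α := by
        intro x
        rw [mul_assoc, ← Real.rpow_add (hq x)]
        norm_num
      have e2 : ∀ x : X, (p x ^ α * q x ^ (α - 1)) ^ (1/α) = p x * q x ^ ((α - 1) / α) := by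
        intro x
        rw [Real.mul_rpow (rpow_pos_of_pos (hp x) _).le (rpow_pos_of_pos (hq x) _).le,
          ← Real.rpow_mul (hp x).le, ← Real.rpow_mul (hq x).le,
          mul_one_div, mul_one_div, div_self hα0, Real.rpow_one]
      have e3 : ∀ x : X, (q x ^ (1 - α)) ^ (1/(1-α)) = q x := by
        intro x
        rw [← Real.rpow_mul (hq x).le, mul_one_div, div_self h1α.ne', Real.rpow_one]
      simp only [e1, e2, e3] at hH
      rw [one_div_one_div, one_div_one_div, hqsum, Real.one_rpow, mul_one,
        ← hSdef, ← hZdef] at hH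
      -- hH : Z ≤ S ^ α
      have hlog : Real.log Z ≤ α * Real.log S := by
        calc Real.log Z ≤ Real.log (S ^ α) :=
              Real.log_le_log hZpos hH
          _ = α * Real.log S := Real.log_rpow hSpos α
      have key : (α / (1 - α)) * Real.log S - (1 / (1 - α)) * Real.log Z
          = (α * Real.log S - Real.log Z) / (1 - α) := by ring
      have : 0 ≤ (α * Real.log S - Real.log Z) / (1 - α) :=
        div_nonneg (by linarith) h1α.le
      linarith [key ▸ this]
    · -- case α > 1 : show S ≤ Z ^ (1/α)
      have h1α : (1:ℝ) - α < 0 := by linarith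
      have hα1' : α - 1 ≠ 0 := by intro h; exact hα1 (by linarith)
      have hconj : Real.HolderConjugate α (α/(α-1)) :=
        Real.holderConjugate_iff.mpr ⟨hgt, by field_simp; ring⟩
      have hH := Real.inner_le_Lp_mul_Lq_of_nonneg univ hconj
        (f := fun x => p x) (g := fun x => q x ^ ((α - 1) / α))
        (fun i _ => (hp i).le) (fun i _ => (rpow_pos_of_pos (hq i) _).le)
      have e2 : ∀ x : X, (q x ^ ((α - 1) / α)) ^ (α / (α - 1)) = q x := by
        intro x
        rw [← Real.rpow_mul (hq x).le]
        have : (α - 1) / α * (α / (α - 1)) = 1 := by field_simp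
        rw [this, Real.rpow_one]
      simp only [e2] at hH
      rw [hqsum, Real.one_rpow, mul_one, ← hSdef, ← hZdef] at hH
      -- hH : S ≤ Z ^ (1/α)
      have hlog : α * Real.log S ≤ Real.log Z := by
        have h1 : Real.log S ≤ (1/α) * Real.log Z := by
          calc Real.log S ≤ Real.log (Z ^ (1/α)) := Real.log_le_log hSpos hH
            _ = (1/α) * Real.log Z := Real.log_rpow hZpos _
        have := mul_le_mul_of_nonneg_left h1 hα.le
        calc α * Real.log S ≤ α * ((1/α) * Real.log Z) := this
          _ = Real.log Z := by field_simp
      have key : (α / (1 - α)) * Real.log S - (1 / (1 - α)) * Real.log Z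
          = (α * Real.log S - Real.log Z) / (1 - α) := by ring
      have : 0 ≤ (α * Real.log S - Real.log Z) / (1 - α) :=
        div_nonneg_of_nonpos (by linarith) h1α.le
      linarith [key ▸ this]
end

section
/- For α ∈ (0,1) ∪ (1,∞) and a fully supported probability mass function p on a finite set X, the unique minimizer of q ↦ (α/(1-α)) log Σ_x p(x) q(x)^((α-1)/α) over the probability simplex is the escort distribution p_α(x) = p(x)^α / Σ_{x'} p(x')^α. -/
open Real Finset

lemma young_aux (θ a b : ℝ) (hθ0 : 0 < θ) (hθ1 : θ < 1) (ha : 0 < a) (hb : 0 < b) :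
    a ^ θ * b ^ (1 - θ) ≤ θ * a + (1 - θ) * b ∧
    (a ^ θ * b ^ (1 - θ) = θ * a + (1 - θ) * b → a = b) := by
  constructor
  · exact Real.geom_mean_le_arith_mean2_weighted hθ0.le (by linarith) ha.le hb.le (by ring)
  · intro h
    by_contra hab
    have hlog := strictConcaveOn_log_Ioi.2 (Set.mem_Ioi.2 ha) (Set.mem_Ioi.2 hb)
      hab hθ0 (by linarith : (0:ℝ) < 1 - θ) (by ring)
    simp only [smul_eq_mul] at hlog
    have h1 : a ^ θ * b ^ (1 - θ) = Real.exp (θ * Real.log a + (1 - θ) * Real.log b) := by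
      rw [Real.rpow_def_of_pos ha, Real.rpow_def_of_pos hb, ← Real.exp_add]
      ring_nf
    have h2 : Real.exp (θ * Real.log a + (1 - θ) * Real.log b)
        < Real.exp (Real.log (θ * a + (1 - θ) * b)) := Real.exp_lt_exp.2 hlog
    rw [Real.exp_log (by nlinarith)] at h2
    rw [h1] at h
    linarith

theorem escort_unique_minimizer_of_alpha_cross_entropy
    {X : Type*} [Fintype X] [Nonempty X]
    (p : X → ℝ) (hp : ∀ x, 0 < p x) (hpsum : ∑ x, p x = 1)
    (α : ℝ) (hα : 0 < α) (hα1 : α ≠ 1) :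
    ∀ q : X → ℝ, (∀ x, 0 < q x) → (∑ x, q x = 1) →
      ((α / (1 - α)) * Real.log (∑ x, p x *
          ((p x ^ α / ∑ x', p x' ^ α)) ^ ((α - 1) / α))
        ≤ (α / (1 - α)) * Real.log (∑ x, p x * q x ^ ((α - 1) / α))) ∧
      ((α / (1 - α)) * Real.log (∑ x, p x * q x ^ ((α - 1) / α)) =
        (α / (1 - α)) * Real.log (∑ x, p x *
          ((p x ^ α / ∑ x', p x' ^ α)) ^ ((α - 1) / α)) →
        q = fun x => p x ^ α / ∑ x', p x' ^ α) := by
  intro q hq hqsum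
  have hα0 : α ≠ 0 := ne_of_gt hα
  have h1α : (1:ℝ) - α ≠ 0 := sub_ne_zero.2 (Ne.symm hα1)
  set β : ℝ := (α - 1) / α with hβ
  set A : ℝ := ∑ x, p x ^ α with hAdef
  have hA0 : 0 < A :=
    Finset.sum_pos (fun x _ => Real.rpow_pos_of_pos (hp x) α) Finset.univ_nonempty
  set Sq : ℝ := ∑ x, p x * q x ^ β with hSqdef
  have hSq0 : 0 < Sq :=
    Finset.sum_pos (fun x _ => mul_pos (hp x) (Real.rpow_pos_of_pos (hq x) β))
      Finset.univ_nonempty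
  have hA1 : (0:ℝ) < A ^ (1/α) := Real.rpow_pos_of_pos hA0 _
  have hcsum : ∑ x, p x ^ α / A = 1 := by
    rw [← Finset.sum_div, ← hAdef, div_self hA0.ne']
  have h1β : (1:ℝ) - β = 1/α := by rw [hβ]; field_simp; ring
  have hαβ : α * β = α - 1 := by rw [hβ]; field_simp
  have hSc : (∑ x, p x * (p x ^ α / A) ^ β) = A ^ (1/α) := by
    have hterm : ∀ x, p x * (p x ^ α / A) ^ β = p x ^ α / A ^ β := by
      intro x
      rw [Real.div_rpow (Real.rpow_nonneg (hp x).le α) hA0.le, ← Real.rpow_mul (hp x).le, hαβ]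
      rw [← mul_div_assoc]
      congr 1
      nth_rewrite 1 [← Real.rpow_one (p x)]
      rw [← Real.rpow_add (hp x)]
      ring_nf
    calc (∑ x, p x * (p x ^ α / A) ^ β) = ∑ x, p x ^ α / A ^ β :=
          Finset.sum_congr rfl fun x _ => hterm x
      _ = A / A ^ β := by rw [← Finset.sum_div, ← hAdef]
      _ = A ^ (1/α) := by
          rw [← h1β, Real.rpow_sub hA0, Real.rpow_one]
  have hk0 : α / (1 - α) ≠ 0 := div_ne_zero hα0 h1α
  rcases lt_or_gt_of_ne hα1 with hlt | hgt
  · -- case α < 1 : minimize Sq, reverse Hölder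
    set a : X → ℝ := fun x => p x * q x ^ β / Sq with hadef
    have ha0 : ∀ x, 0 < a x := fun x =>
      div_pos (mul_pos (hp x) (Real.rpow_pos_of_pos (hq x) β)) hSq0
    have hasum : ∑ x, a x = 1 := by
      have h0 : ∑ x, a x = ∑ x, p x * q x ^ β / Sq := rfl
      rw [h0, ← Finset.sum_div, ← hSqdef, div_self hSq0.ne']
    have hY := fun x => young_aux α (a x) (q x) hα hlt (ha0 x) (hq x)
    have hrw : ∀ x, a x ^ α * q x ^ (1 - α) = p x ^ α / Sq ^ α := by
      intro x
      show (p x * q x ^ β / Sq) ^ α * q x ^ (1 - α) = p x ^ α / Sq ^ α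
      rw [Real.div_rpow (mul_nonneg (hp x).le (Real.rpow_nonneg (hq x).le β)) hSq0.le,
        Real.mul_rpow (hp x).le (Real.rpow_nonneg (hq x).le β),
        ← Real.rpow_mul (hq x).le]
      have hβα : β * α = α - 1 := by rw [mul_comm]; exact hαβ
      rw [hβα, div_mul_eq_mul_div, mul_assoc, ← Real.rpow_add (hq x)]
      ring_nf
      rw [Real.rpow_zero, mul_one]
    have hSqα : (0:ℝ) < Sq ^ α := Real.rpow_pos_of_pos hSq0 α
    have hAle : A ≤ Sq ^ α := by
      rw [← div_le_one hSqα]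
      calc A / Sq ^ α = ∑ x, p x ^ α / Sq ^ α := by rw [← Finset.sum_div, ← hAdef]
        _ = ∑ x, a x ^ α * q x ^ (1 - α) :=
            Finset.sum_congr rfl fun x _ => (hrw x).symm
        _ ≤ ∑ x, (α * a x + (1 - α) * q x) := Finset.sum_le_sum fun x _ => (hY x).1
        _ = 1 := by
            rw [Finset.sum_add_distrib, ← Finset.mul_sum, ← Finset.mul_sum, hasum, hqsum]
            ring
    have hle : A ^ (1/α) ≤ Sq := by
      have h := Real.rpow_le_rpow hA0.le hAle (by positivity : (0:ℝ) ≤ 1/α)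
      rwa [← Real.rpow_mul hSq0.le, mul_one_div, div_self hα0, Real.rpow_one] at h
    have hkpos : 0 < α / (1 - α) := div_pos hα (by linarith)
    constructor
    · rw [hSc]
      exact mul_le_mul_of_nonneg_left (Real.log_le_log hA1 hle) hkpos.le
    · intro heq
      rw [hSc] at heq
      have hSeq : Sq = A ^ (1/α) := by
        have h2 := mul_left_cancel₀ hk0 heq
        have h3 := congrArg Real.exp h2
        rwa [Real.exp_log hSq0, Real.exp_log hA1] at h3
      have hSA : Sq ^ α = A := by
        rw [hSeq, ← Real.rpow_mul hA0.le, one_div_mul_cancel hα0, Real.rpow_one]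
      have hsum_eq : ∑ x, a x ^ α * q x ^ (1 - α) = ∑ x, (α * a x + (1 - α) * q x) := by
        have hL : ∑ x, a x ^ α * q x ^ (1 - α) = 1 := by
          calc ∑ x, a x ^ α * q x ^ (1 - α) = ∑ x, p x ^ α / Sq ^ α :=
              Finset.sum_congr rfl fun x _ => hrw x
            _ = A / Sq ^ α := by rw [← Finset.sum_div, ← hAdef]
            _ = 1 := by rw [hSA, div_self hA0.ne']
        have hR : ∑ x, (α * a x + (1 - α) * q x) = 1 := by
          rw [Finset.sum_add_distrib, ← Finset.mul_sum, ← Finset.mul_sum, hasum, hqsum]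
          ring
        rw [hL, hR]
      have htw := (Finset.sum_eq_sum_iff_of_le (fun x _ => (hY x).1)).1 hsum_eq
      funext x
      have hax : a x = q x := (hY x).2 (htw x (Finset.mem_univ x))
      -- derive q x = p x ^ α / A
      have hax2 : p x * q x ^ β / Sq = q x := hax
      have hax' : p x * q x ^ β = Sq * q x := by
        field_simp [hSq0.ne'] at hax2
        linarith
      have h5 : p x * q x ^ (β - 1) * q x = Sq * q x := by
        rw [mul_assoc, ← Real.rpow_add_one (hq x).ne' (β - 1), sub_add_cancel]
        exact hax'
      have h6 : p x * q x ^ (β - 1) = Sq := mul_right_cancel₀ (hq x).ne' h5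
      have hβ1 : β - 1 = -(1/α) := by rw [hβ]; field_simp; ring
      have h7 : q x ^ (1/α) = p x / Sq := by
        rw [hβ1, Real.rpow_neg (hq x).le] at h6
        have hqp : (0:ℝ) < q x ^ (1/α) := Real.rpow_pos_of_pos (hq x) _
        field_simp [hqp.ne'] at h6
        rw [eq_div_iff hSq0.ne']
        nlinarith [h6]
      have h8 : q x = (q x ^ (1/α)) ^ α := by
        rw [← Real.rpow_mul (hq x).le, one_div_mul_cancel hα0, Real.rpow_one]
      rw [h8, h7, Real.div_rpow (hp x).le hSq0.le, hSA]
  · -- case α > 1 : maximize Sq, Hölder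
    have hθ0 : (0:ℝ) < 1/α := by positivity
    have hθ1 : 1/α < 1 := by rw [div_lt_one hα]; exact hgt
    have hY := fun x => young_aux (1/α) (p x ^ α / A) (q x) hθ0 hθ1
      (div_pos (Real.rpow_pos_of_pos (hp x) α) hA0) (hq x)
    have hrw : ∀ x, (p x ^ α / A) ^ (1/α) * q x ^ (1 - 1/α) = p x * q x ^ β / A ^ (1/α) := by
      intro x
      have e1 : (1:ℝ) - 1/α = β := by rw [hβ]; field_simp
      rw [e1, Real.div_rpow (Real.rpow_nonneg (hp x).le α) hA0.le,
        ← Real.rpow_mul (hp x).le, mul_one_div, div_self hα0, Real.rpow_one,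
        div_mul_eq_mul_div]
    have hle : Sq ≤ A ^ (1/α) := by
      rw [← div_le_one hA1]
      calc Sq / A ^ (1/α) = ∑ x, (p x ^ α / A) ^ (1/α) * q x ^ (1 - 1/α) := by
            rw [hSqdef, Finset.sum_div]
            exact Finset.sum_congr rfl fun x _ => (hrw x).symm
        _ ≤ ∑ x, ((1/α) * (p x ^ α / A) + (1 - 1/α) * q x) :=
            Finset.sum_le_sum fun x _ => (hY x).1
        _ = 1 := by
            rw [Finset.sum_add_distrib, ← Finset.mul_sum, ← Finset.mul_sum, hcsum, hqsum]
            ring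
    have hkneg : α / (1 - α) < 0 := div_neg_of_pos_of_neg hα (by linarith)
    constructor
    · rw [hSc]
      exact mul_le_mul_of_nonpos_left (Real.log_le_log hSq0 hle) hkneg.le
    · intro heq
      rw [hSc] at heq
      have hSeq : Sq = A ^ (1/α) := by
        have h2 := mul_left_cancel₀ hk0 heq
        have h3 := congrArg Real.exp h2
        rwa [Real.exp_log hSq0, Real.exp_log hA1] at h3
      have hsum_eq : ∑ x, (p x ^ α / A) ^ (1/α) * q x ^ (1 - 1/α)
          = ∑ x, ((1/α) * (p x ^ α / A) + (1 - 1/α) * q x) := by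
        have hL : ∑ x, (p x ^ α / A) ^ (1/α) * q x ^ (1 - 1/α) = 1 := by
          calc ∑ x, (p x ^ α / A) ^ (1/α) * q x ^ (1 - 1/α)
              = ∑ x, p x * q x ^ β / A ^ (1/α) :=
                Finset.sum_congr rfl fun x _ => hrw x
            _ = Sq / A ^ (1/α) := by rw [← Finset.sum_div, ← hSqdef]
            _ = 1 := by rw [hSeq, div_self hA1.ne']
        have hR : ∑ x, ((1/α) * (p x ^ α / A) + (1 - 1/α) * q x) = 1 := by
          rw [Finset.sum_add_distrib, ← Finset.mul_sum, ← Finset.mul_sum, hcsum, hqsum]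
          ring
        rw [hL, hR]
      have htw := (Finset.sum_eq_sum_iff_of_le (fun x _ => (hY x).1)).1 hsum_eq
      funext x
      exact ((hY x).2 (htw x (Finset.mem_univ x))).symm
end

section
/- For α ∈ (0,1) ∪ (1,∞), the Sibson mutual information I_α^S(X;Y) = (α/(α-1)) log Σ_y (Σ_x P_X(x) P_{Y|X}(y|x)^α)^(1/α) equals the f̃-mean of Rényi divergences: (α/(α-1)) log Σ_y P_Y(y) exp( ((α-1)/α) · D_α(P_{X|Y=y} ‖ P_X) ), where D_α(P_{X|Y=y}‖P_X) = (1/(α-1)) log Σ_x P_X(x) (P_{X|Y}(x|y)/P_X(x))^α. -/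
open Real Finset

theorem sibson_mutual_information_fmean_of_renyi_divergences
    {X Y : Type*} [Fintype X] [Fintype Y] [Nonempty X] [Nonempty Y]
    (P : X → Y → ℝ) (hP : ∀ x y, 0 < P x y)
    (hPsum : ∑ x, ∑ y, P x y = 1)
    (α : ℝ) (hα : 0 < α) (hα1 : α ≠ 1) :
    (α / (α - 1)) * Real.log (∑ y,
        (∑ x, (∑ y', P x y') * (P x y / ∑ y', P x y') ^ α) ^ (1 / α)) =
      (α / (α - 1)) * Real.log (∑ y, (∑ x, P x y) *
        Real.exp (((α - 1) / α) *
          ((1 / (α - 1)) * Real.log (∑ x, (∑ y', P x y') *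
            ((P x y / ∑ x', P x' y) / (∑ y', P x y')) ^ α)))) := by
  have hα0 : α ≠ 0 := ne_of_gt hα
  have hα1' : α - 1 ≠ 0 := sub_ne_zero.mpr hα1
  congr 1
  congr 1
  apply Finset.sum_congr rfl
  intro y _
  set Q : ℝ := ∑ x, P x y with hQdef
  have hQ : 0 < Q := Finset.sum_pos (fun x _ => hP x y) Finset.univ_nonempty
  set S : ℝ := ∑ x, (∑ y', P x y') * (P x y / ∑ y', P x y') ^ α with hSdef
  have hMx : ∀ x : X, 0 < ∑ y', P x y' :=
    fun x => Finset.sum_pos (fun y' _ => hP x y') Finset.univ_nonempty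
  have hS : 0 < S := by
    apply Finset.sum_pos _ Finset.univ_nonempty
    intro x _
    exact mul_pos (hMx x) (Real.rpow_pos_of_pos (div_pos (hP x y) (hMx x)) α)
  have hinner : (∑ x, (∑ y', P x y') *
      ((P x y / ∑ x', P x' y) / (∑ y', P x y')) ^ α) = S / Q ^ α := by
    rw [hSdef, Finset.sum_div]
    apply Finset.sum_congr rfl
    intro x _
    have h1 : (P x y / Q) / (∑ y', P x y') = (P x y / ∑ y', P x y') / Q := by
      rw [div_div, div_div, mul_comm]
    rw [h1, Real.div_rpow (div_pos (hP x y) (hMx x)).le hQ.le, mul_div_assoc]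
  rw [hinner]
  have hcoef : ((α - 1) / α) * ((1 / (α - 1)) * Real.log (S / Q ^ α)) =
      (1 / α) * Real.log (S / Q ^ α) := by
    field_simp
  rw [hcoef]
  have hSQ : 0 < S / Q ^ α := div_pos hS (Real.rpow_pos_of_pos hQ α)
  rw [mul_comm (1 / α), ← Real.rpow_def_of_pos hSQ,
    Real.div_rpow hS.le (Real.rpow_pos_of_pos hQ α).le,
    ← Real.rpow_mul hQ.le, mul_one_div, div_self hα0, Real.rpow_one]
  field_simp
end

section
/- The maximal leakage identity: for a fully supported joint distribution P_{XY} on finite sets X, Y, log Σ_y P_Y(y) · max_x (P_{X|Y}(x|y)/P_X(x)) = log Σ_y max_x P_{Y|X}(y|x). That is, the maximal leakage equals the f̃-mean (at α = ∞, i.e., log of expectation of exponential) of the pointwise maximal leakage L_∞(X→y) = log max_x P_{X|Y}(x|y)/P_X(x). -/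
open Real Finset

theorem maximal_leakage_eq_fmean_of_pml
    {X Y : Type*} [Fintype X] [Fintype Y] [Nonempty X] [Nonempty Y]
    (P : X → Y → ℝ) (hP : ∀ x y, 0 ≤ P x y)
    (hPsum : ∑ x, ∑ y, P x y = 1)
    (hPX : ∀ x, 0 < ∑ y, P x y) (hPY : ∀ y, 0 < ∑ x, P x y) :
    Real.log (∑ y, (∑ x, P x y) *
        Finset.univ.sup' Finset.univ_nonempty
          (fun x => (P x y / ∑ x', P x' y) / (∑ y', P x y'))) =
      Real.log (∑ y, Finset.univ.sup' Finset.univ_nonempty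
        (fun x => P x y / ∑ y', P x y')) := by
  congr 1
  refine Finset.sum_congr rfl fun y _ => ?_
  rw [Finset.comp_sup'_eq_sup'_comp (f := fun x => (P x y / ∑ x', P x' y) / (∑ y', P x y'))
      Finset.univ_nonempty (fun r => (∑ x, P x y) * r)
      (fun a b => mul_max_of_nonneg a b (hPY y).le)]
  refine Finset.sup'_congr _ rfl fun x _ => ?_
  field_simp
  simp only [Function.comp_apply, ← mul_div_assoc]
  rw [mul_div_mul_left _ _ (hPY y).ne']
end

section
/- For a fully supported pmf p on a finite set X and fixed fully supported pmf q, the α-loss L_α(p,q) = (Σ_x p(x) q(x)^((α-1)/α))^(α/(1-α)) converges as α → 1 to the exponential of the Shannon cross entropy, Π_x q(x)^(-p(x)) = exp(-Σ_x p(x) log q(x)). -/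
open Real Finset Filter

theorem alpha_loss_tendsto_exp_cross_entropy
    {X : Type*} [Fintype X] [Nonempty X]
    (p q : X → ℝ) (hp : ∀ x, 0 < p x) (hq : ∀ x, 0 < q x)
    (hpsum : ∑ x, p x = 1) (hqsum : ∑ x, q x = 1) :
    Filter.Tendsto
      (fun α : ℝ => (∑ x, p x * q x ^ ((α - 1) / α)) ^ (α / (1 - α)))
      (nhdsWithin 1 ({(1 : ℝ)}ᶜ ∩ Set.Ioi 0))
      (nhds (Real.exp (-∑ x, p x * Real.log (q x)))) := by
  set C := ∑ x, p x * Real.log (q x) with hC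
  set h : ℝ → ℝ := fun t => Real.log (∑ x, p x * q x ^ t) with hh
  have hS : ∀ t : ℝ, 0 < ∑ x, p x * q x ^ t := fun t =>
    Finset.sum_pos (fun x _ => mul_pos (hp x) (Real.rpow_pos_of_pos (hq x) t))
      Finset.univ_nonempty
  have hS0 : (∑ x, p x * q x ^ (0:ℝ)) = 1 := by
    simp only [Real.rpow_zero, mul_one]; exact hpsum
  have hder : HasDerivAt h C 0 := by
    have h1 : HasDerivAt (fun t : ℝ => ∑ x, p x * q x ^ t)
        (∑ x, p x * (q x ^ (0:ℝ) * Real.log (q x))) (0:ℝ) := by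
      exact HasDerivAt.fun_sum fun x _ =>
        ((hasStrictDerivAt_const_rpow (hq x) (0:ℝ)).hasDerivAt).const_mul (p x)
    have h2 := h1.log (by rw [hS0]; norm_num)
    have : (∑ x, p x * (q x ^ (0:ℝ) * Real.log (q x))) / (∑ x, p x * q x ^ (0:ℝ)) = C := by
      rw [hS0, hC]
      simp [Real.rpow_zero]
    rwa [this] at h2
  have h0 : h 0 = 0 := by rw [hh]; simp only [hS0, Real.log_one]
  -- slope limit
  have hslope : Tendsto (fun t => h t / t) (nhdsWithin 0 {(0:ℝ)}ᶜ) (nhds C) := by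
    have := hasDerivAt_iff_tendsto_slope.mp hder
    refine this.congr fun t => ?_
    simp [slope, h0, div_eq_inv_mul]
  -- the map ψ α = (α-1)/α
  have hpsi : Tendsto (fun α : ℝ => (α - 1) / α)
      (nhdsWithin 1 ({(1:ℝ)}ᶜ ∩ Set.Ioi 0)) (nhdsWithin 0 {(0:ℝ)}ᶜ) := by
    apply tendsto_nhdsWithin_of_tendsto_nhds_of_eventually_within
    · have : Tendsto (fun α : ℝ => (α - 1) / α) (nhds 1) (nhds ((1 - 1) / 1)) := by
        exact (tendsto_id.sub tendsto_const_nhds).div tendsto_id (by norm_num)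
      simpa using this.mono_left nhdsWithin_le_nhds
    · filter_upwards [self_mem_nhdsWithin] with α hα
      obtain ⟨hα1, hα0⟩ := hα
      have hα0' : (0:ℝ) < α := hα0
      have : α - 1 ≠ 0 := sub_ne_zero.mpr hα1
      exact div_ne_zero this (ne_of_gt hα0')
  have hmain : Tendsto (fun α : ℝ => (α / (1 - α)) * h ((α - 1) / α))
      (nhdsWithin 1 ({(1:ℝ)}ᶜ ∩ Set.Ioi 0)) (nhds (-C)) := by
    have hcomp := (hslope.comp hpsi).neg
    refine hcomp.congr' ?_
    filter_upwards [self_mem_nhdsWithin] with α hα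
    obtain ⟨hα1, hα0⟩ := hα
    have hα0' : (α:ℝ) ≠ 0 := ne_of_gt hα0
    have hα1' : α - 1 ≠ 0 := sub_ne_zero.mpr hα1
    have h1α : 1 - α ≠ 0 := by
      intro hc; apply hα1'; linarith
    simp only [Function.comp_apply]
    field_simp
    ring
  have := (Real.continuous_exp.tendsto _).comp hmain
  refine this.congr' ?_
  filter_upwards [self_mem_nhdsWithin] with α hα
  simp only [Function.comp]
  rw [hh, Real.rpow_def_of_pos (hS _), mul_comm]
end
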